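/- arXiv:1905.12351 — 2 statements merged into one kernel-verified Lean document; each statement's English description precedes it below -/
import Mathlib

section
/- Let M and V be types and h : M → V → M a function that is injective as a function of the pair, i.e., h m v = h m' v' implies m = m' and v = v'. Define chainMark : M → List V → M by chainMark m l = l.foldl h m (the mark obtained by iteratively hashing the previous mark with each new value). Then chainMark is injective on inputs with lists of equal length: if chainMark m l = chainMark m' l' and l.length = l'.length, then m = m' and l = l'. Thus the final mark of a series uniquely determines the initial mark and the entire sequence of values. -/
/-- The mark obtained by iteratively hashing the previous mark with each new value. -/
def chainMark {M V : Type*} (h : M → V → M) (m : M) (l : List V) : M :=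
  l.foldl h m

theorem chainMark_injective {M V : Type*} (h : M → V → M)
    (hinj : ∀ m m' v v', h m v = h m' v' → m = m' ∧ v = v') :
    ∀ (m m' : M) (l l' : List V), l.length = l'.length →
      chainMark h m l = chainMark h m' l' → m = m' ∧ l = l' := by
  intro m m' l
  induction l generalizing m m' with
  | nil =>
    intro l' hlen heq
    cases l' with
    | nil => exact ⟨heq, rfl⟩
    | cons => simp at hlen
  | cons v t ih =>
    intro l' hlen heq
    cases l' with
    | nil => simp at hlen
    | cons v' t' =>
      simp at hlen
      obtain ⟨hm, ht⟩ := ih (h m v) (h m' v') t' hlen heq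
      obtain ⟨h1, h2⟩ := hinj _ _ _ _ hm
      exact ⟨h1, by rw [h2, ht]⟩
end

section
/- Let T be a finite type and r a binary relation on T that is acyclic (its transitive closure is irreflexive) and in which every vertex has at most one r-predecessor (r a b and r a' b imply a = a'). Then for every vertex b, the set of strict r-ancestors of b, namely {a : T | TransGen r a b}, is linearly ordered by the transitive closure of r: for any two distinct ancestors a and a' of b, either TransGen r a a' or TransGen r a' a. Hence the transactions preceding any given transaction in the Hash-Mark-Set graph form a single series (a chain). -/
private lemma refl_comparable {T : Type*} (r : T → T → Prop)
    (hpred : ∀ a a' b, r a b → r a' b → a = a') :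
    ∀ c a a', Relation.ReflTransGen r a c → Relation.ReflTransGen r a' c →
      Relation.ReflTransGen r a a' ∨ Relation.ReflTransGen r a' a := by
  intro c a a' h
  induction h with
  | refl => intro h'; right; exact h'
  | tail hd hdc ih =>
    intro h'
    rcases h'.cases_tail with rfl | ⟨d', hd', hd'c⟩
    · left; exact Relation.ReflTransGen.tail hd hdc
    · exact ih (hpred d' _ _ hd'c hdc ▸ hd')

theorem ancestors_linear_of_unique_pred {T : Type*} [Fintype T] (r : T → T → Prop)
    (hacyc : Irreflexive (Relation.TransGen r))
    (hpred : ∀ a a' b, r a b → r a' b → a = a') :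
    ∀ b a a', Relation.TransGen r a b → Relation.TransGen r a' b → a ≠ a' →
      Relation.TransGen r a a' ∨ Relation.TransGen r a' a := by
  intro b a a' hab ha'b hne
  obtain ⟨c, hac, hcb⟩ := (Relation.TransGen.tail'_iff.mp hab)
  obtain ⟨c', ha'c, hc'b⟩ := (Relation.TransGen.tail'_iff.mp ha'b)
  have := hpred c' c b hc'b hcb
  subst this
  rcases refl_comparable r hpred c' a a' hac ha'c with h | h
  · rcases (Relation.reflTransGen_iff_eq_or_transGen.mp h) with rfl | h
    · exact absurd rfl hne
    · left; exact h
  · rcases (Relation.reflTransGen_iff_eq_or_transGen.mp h) with rfl | h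
    · exact absurd rfl hne
    · right; exact h
end
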